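/- Let Γ be a simple graph on a finite vertex set V, let s, t ∈ V be distinct vertices not adjacent in Γ, and let Γ ∪ e be Γ with the edge e = (s, t) added. A set K of vertices is a clique of Γ ∪ e but not a clique of Γ if and only if there exist maximal cliques ℓ_s and ℓ_t of Γ with s ∈ ℓ_s and t ∈ ℓ_t and a subset σ ⊆ ℓ_s ∩ ℓ_t such that K = σ ∪ {s, t}. -/

import Mathlib

/-!
A clique `K` of `Γ ⊔ edge s t` that is not a clique of `Γ` must contain both `s` and `t`, and
`K \ {t}`, `K \ {s}` are cliques of `Γ`; by Zorn's lemma they extend to maximal cliques `ℓs ∋ s`,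
`ℓt ∋ t`, and `σ = K \ {s, t}` works. Conversely `σ ∪ {s, t}` minus either endpoint lies in one of
the two maximal cliques, and it is not a clique of `Γ` because `s` and `t` are not adjacent.
-/

/-- A maximal clique of a simple graph: a clique not properly contained in any other clique. -/
def IsMaxClique {V : Type*} (G : SimpleGraph V) (c : Set V) : Prop :=
  G.IsClique c ∧ ∀ d : Set V, G.IsClique d → c ⊆ d → c = d

open SimpleGraph Set

theorem isMaxClique_iff_maximal {V : Type*} {G : SimpleGraph V} {c : Set V} :
    IsMaxClique G c ↔ Maximal G.IsClique c :=
  and_congr_right fun _ ↦ forall₃_congr fun _ _ hcd ↦ ⟨fun h ↦ h.ge, hcd.antisymm⟩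

theorem SimpleGraph.IsClique.exists_isMaxClique_superset {V : Type*} {G : SimpleGraph V}
    {c : Set V} (hc : G.IsClique c) : ∃ m, c ⊆ m ∧ IsMaxClique G m := by
  obtain ⟨m, hcm, hm⟩ := zorn_subset_nonempty {d | G.IsClique d}
    (fun C hC hchain _ ↦ ⟨⋃₀ C, (isClique_sUnion hchain.directedOn).2 hC,
      fun _ ↦ subset_sUnion_of_mem⟩) c hc
  exact ⟨m, hcm, isMaxClique_iff_maximal.2 hm⟩

theorem SimpleGraph.IsClique.mem_of_sup_edge_of_not_isClique {V : Type*} {G : SimpleGraph V}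
    {v w : V} {K : Set V} (hK : (G ⊔ edge v w).IsClique K) (hnK : ¬ G.IsClique K) :
    v ∈ K ∧ w ∈ K := by
  constructor <;> by_contra h
  · exact hnK (sdiff_singleton_eq_self h ▸ hK.sdiff_of_sup_edge)
  · exact hnK (sdiff_singleton_eq_self h ▸ (edge_comm v w ▸ hK).sdiff_of_sup_edge)

theorem statement_11_general {V : Type*} (Γ : SimpleGraph V) (s t : V) (hst : s ≠ t)
    (hadj : ¬ Γ.Adj s t) (K : Set V) :
    ((Γ ⊔ SimpleGraph.edge s t).IsClique K ∧ ¬ Γ.IsClique K) ↔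
      ∃ ℓs ℓt : Set V, IsMaxClique Γ ℓs ∧ IsMaxClique Γ ℓt ∧ s ∈ ℓs ∧ t ∈ ℓt ∧
        ∃ σ : Set V, σ ⊆ ℓs ∩ ℓt ∧ K = σ ∪ {s, t} := by
  constructor
  · rintro ⟨hK, hnK⟩
    obtain ⟨hsK, htK⟩ := hK.mem_of_sup_edge_of_not_isClique hnK
    obtain ⟨hKs, hKt⟩ := (isClique_sup_edge_of_ne_iff hst).1 hK
    obtain ⟨ℓs, hKℓs, hℓs⟩ := hKt.exists_isMaxClique_superset
    obtain ⟨ℓt, hKℓt, hℓt⟩ := hKs.exists_isMaxClique_superset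
    refine ⟨ℓs, ℓt, hℓs, hℓt, hKℓs ⟨hsK, hst⟩, hKℓt ⟨htK, hst.symm⟩, K \ {s, t}, ?_, ?_⟩
    · exact subset_inter ((sdiff_subset_sdiff_right (by simp)).trans hKℓs)
        ((sdiff_subset_sdiff_right (by simp)).trans hKℓt)
    · exact (sdiff_union_of_subset (insert_subset hsK (singleton_subset_iff.2 htK))).symm
  · rintro ⟨ℓs, ℓt, hℓs, hℓt, hsℓ, htℓ, σ, hσ, rfl⟩
    refine ⟨(isClique_sup_edge_of_ne_iff hst).2 ⟨hℓt.1.subset ?_, hℓs.1.subset ?_⟩,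
      fun h ↦ hadj (h (by simp) (by simp) hst)⟩
    · rintro x ⟨hx | rfl | rfl, hxs⟩
      exacts [(hσ hx).2, absurd rfl hxs, htℓ]
    · rintro x ⟨hx | rfl | rfl, hxt⟩
      exacts [(hσ hx).1, hsℓ, absurd rfl hxt]

/-- `K` is a clique of `Γ ∪ e` but not a clique of `Γ` if and only if there
are maximal cliques `ℓs ∋ s`, `ℓt ∋ t` of `Γ` and a subset `σ ⊆ ℓs ∩ ℓt` with
`K = σ ∪ {s, t}`. -/
theorem statement_11 {V : Type*} [Fintype V] (Γ : SimpleGraph V) (s t : V) (hst : s ≠ t)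
    (hadj : ¬ Γ.Adj s t) (K : Set V) :
    ((Γ ⊔ SimpleGraph.edge s t).IsClique K ∧ ¬ Γ.IsClique K) ↔
      ∃ ℓs ℓt : Set V, IsMaxClique Γ ℓs ∧ IsMaxClique Γ ℓt ∧ s ∈ ℓs ∧ t ∈ ℓt ∧
        ∃ σ : Set V, σ ⊆ ℓs ∩ ℓt ∧ K = σ ∪ {s, t} :=
  statement_11_general Γ s t hst hadj K
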